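/- arXiv:1701.01752 — 5 statements merged into one kernel-verified Lean document; each statement's English description precedes it below -/
import Mathlib

section
/- Let C be a coalgebra over a field K and let r : C ⊗ C → C ⊗ C be a coalgebra morphism. Define σ := (id_C ⊗ ε) ∘ r and τ := (ε ⊗ id_C) ∘ r. Then r = (σ ⊗ τ) ∘ Δ_{C⊗C}, and σ, τ are the unique pair of coalgebra morphisms C ⊗ C → C with this property. -/
/-!
The tensor product coalgebra `A ⊗ B` behaves like a product: with projections `p₁ = id ⊗ ε` and
`p₂ = ε ⊗ id` one has `(p₁ ⊗ p₂) ∘ Δ = id`, and `p₁ ∘ (f ⊗ g) ∘ Δ = f` whenever `g` preserves the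
counit (symmetrically for `p₂`). Since `r` commutes with comultiplication,
`(σ ⊗ τ) ∘ Δ = (p₁ ⊗ p₂) ∘ Δ ∘ r = r`; and if `r = (σ' ⊗ τ') ∘ Δ` then `σ = p₁ ∘ r = σ'` and
`τ = p₂ ∘ r = τ'`.
-/

open TensorProduct Coalgebra LinearMap

namespace Coalgebra

variable {R A B D : Type*} [CommRing R] [AddCommGroup A] [Module R A] [AddCommGroup B]
  [Module R B] [AddCommGroup D] [Module R D] [Coalgebra R D]

theorem rid_lTensor_counit_comp_map_comp_comul [CoalgebraStruct R B] (f : D →ₗ[R] A)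
    (g : D →ₗ[R] B) (hg : counit ∘ₗ g = counit) :
    (_root_.TensorProduct.rid R A).toLinearMap ∘ₗ lTensor A counit ∘ₗ map f g ∘ₗ comul = f := by
  rw [← comp_assoc comul, lTensor_comp_map, hg, ← rTensor_comp_lTensor, comp_assoc,
    lTensor_counit_comp_comul]
  ext; simp

theorem lid_rTensor_counit_comp_map_comp_comul [CoalgebraStruct R A] (f : D →ₗ[R] A)
    (g : D →ₗ[R] B) (hf : counit ∘ₗ f = counit) :
    (_root_.TensorProduct.lid R B).toLinearMap ∘ₗ rTensor B counit ∘ₗ map f g ∘ₗ comul = g := by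
  rw [← comp_assoc comul, rTensor_comp_map, hf, ← lTensor_comp_rTensor, comp_assoc,
    rTensor_counit_comp_comul]
  ext; simp

variable (R A B) [Coalgebra R A] [Coalgebra R B]

noncomputable def fstCoalgHom : A ⊗[R] B →ₗc[R] A :=
  (Coalgebra.TensorProduct.rid R R A).toCoalgHom.comp (CoalgHom.lTensor A (counitCoalgHom R B))

noncomputable def sndCoalgHom : A ⊗[R] B →ₗc[R] B :=
  (Coalgebra.TensorProduct.lid R B).toCoalgHom.comp (CoalgHom.rTensor B (counitCoalgHom R A))

theorem fstCoalgHom_toLinearMap :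
    (fstCoalgHom R A B).toLinearMap =
      (_root_.TensorProduct.rid R A).toLinearMap ∘ₗ lTensor A counit :=
  rfl

theorem sndCoalgHom_toLinearMap :
    (sndCoalgHom R A B).toLinearMap =
      (_root_.TensorProduct.lid R B).toLinearMap ∘ₗ rTensor B counit :=
  rfl

theorem map_fstCoalgHom_sndCoalgHom_comp_comul :
    map (fstCoalgHom R A B).toLinearMap (sndCoalgHom R A B).toLinearMap ∘ₗ
      comul (R := R) (A := A ⊗[R] B) = LinearMap.id := by
  have hcomul : comul (R := R) (A := A ⊗[R] B) =
      (tensorTensorTensorComm R A A B B).toLinearMap ∘ₗ map comul comul := rfl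
  have hproj : map ((_root_.TensorProduct.rid R A).toLinearMap ∘ₗ lTensor A (counit (A := B)))
      ((_root_.TensorProduct.lid R B).toLinearMap ∘ₗ rTensor B (counit (A := A))) ∘ₗ
      (tensorTensorTensorComm R A A B B).toLinearMap =
      map ((_root_.TensorProduct.rid R A).toLinearMap ∘ₗ lTensor A counit)
        ((_root_.TensorProduct.lid R B).toLinearMap ∘ₗ rTensor B counit) := by
    ext; simp [← smul_tmul', smul_smul, mul_comm]
  have hrid : (_root_.TensorProduct.rid R A).toLinearMap ∘ₗ lTensor A counit ∘ₗ comul =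
      LinearMap.id := by
    rw [lTensor_counit_comp_comul]; ext; simp
  have hlid : (_root_.TensorProduct.lid R B).toLinearMap ∘ₗ rTensor B counit ∘ₗ comul =
      LinearMap.id := by
    rw [rTensor_counit_comp_comul]; ext; simp
  rw [fstCoalgHom_toLinearMap, sndCoalgHom_toLinearMap, hcomul, ← comp_assoc, hproj,
    ← map_comp, comp_assoc, comp_assoc, hrid, hlid, map_id]

end Coalgebra

/-- For a coalgebra morphism `r : C ⊗ C → C ⊗ C`, with `σ := (id ⊗ ε) ∘ r` and
`τ := (ε ⊗ id) ∘ r`, one has `r = (σ ⊗ τ) ∘ Δ_{C ⊗ C}`, and `σ`, `τ` are the unique pair of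
coalgebra morphisms `C ⊗ C → C` with this property. -/
theorem coalgHom_factorization {K C : Type*} [Field K] [AddCommGroup C] [Module K C]
    [Coalgebra K C] (r : (C ⊗[K] C) →ₗc[K] (C ⊗[K] C)) :
    let σ : C ⊗[K] C →ₗ[K] C :=
      (TensorProduct.rid K C).toLinearMap ∘ₗ
        LinearMap.lTensor C (counit (R := K) (A := C)) ∘ₗ r.toLinearMap
    let τ : C ⊗[K] C →ₗ[K] C :=
      (TensorProduct.lid K C).toLinearMap ∘ₗ
        LinearMap.rTensor C (counit (R := K) (A := C)) ∘ₗ r.toLinearMap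
    r.toLinearMap = TensorProduct.map σ τ ∘ₗ (comul (R := K) (A := C ⊗[K] C)) ∧
    (∃ σc : (C ⊗[K] C) →ₗc[K] C, σc.toLinearMap = σ) ∧
    (∃ τc : (C ⊗[K] C) →ₗc[K] C, τc.toLinearMap = τ) ∧
    (∀ σ' τ' : (C ⊗[K] C) →ₗc[K] C,
      r.toLinearMap =
        TensorProduct.map σ'.toLinearMap τ'.toLinearMap ∘ₗ (comul (R := K) (A := C ⊗[K] C)) →
      σ'.toLinearMap = σ ∧ τ'.toLinearMap = τ) := by
  intro σ τ
  refine ⟨?_, ⟨(fstCoalgHom K C C).comp r, rfl⟩, ⟨(sndCoalgHom K C C).comp r, rfl⟩,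
    fun σ' τ' hr => ⟨?_, ?_⟩⟩
  · calc r.toLinearMap
        = (map (fstCoalgHom K C C).toLinearMap (sndCoalgHom K C C).toLinearMap ∘ₗ comul) ∘ₗ
            r.toLinearMap := by
          rw [map_fstCoalgHom_sndCoalgHom_comp_comul, id_comp]
      _ = map σ τ ∘ₗ comul := by
          rw [comp_assoc, ← r.map_comp_comul, ← comp_assoc, ← map_comp]
          rfl
  · rw [← rid_lTensor_counit_comp_map_comp_comul σ'.toLinearMap _ τ'.counit_comp, ← hr]
  · rw [← lid_rTensor_counit_comp_map_comp_comul _ τ'.toLinearMap σ'.counit_comp, ← hr]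
end

section
/- Let C be a coalgebra over a field K, r : C² → C² a coalgebra automorphism, σ := (C ⊗ ε) ∘ r and τ := (ε ⊗ C) ∘ r. Then there exist linear maps σ̄, τ̄ : C² → C satisfying σ̄ ∘ (C ⊗ σ) ∘ (Δ ⊗ C) = σ ∘ (C ⊗ σ̄) ∘ (Δ ⊗ C) = ε ⊗ C and τ̄ ∘ (τ ⊗ C) ∘ (C ⊗ Δ) = τ ∘ (τ̄ ⊗ C) ∘ (C ⊗ Δ) = C ⊗ ε if and only if the two maps (C ⊗ σ) ∘ (Δ ⊗ C) and (τ ⊗ C) ∘ (C ⊗ Δ) from C² to C² are bijective; moreover in that case their compositional inverses are (C ⊗ σ̄) ∘ (Δ ⊗ C) and (τ̄ ⊗ C) ∘ (C ⊗ Δ) respectively. -/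
/-!
Write `S f := (C ⊗ f) ∘ (Δ ⊗ C)` for `f : C² → C`. The counit law gives `S (ε ⊗ C) = id` and
`(ε ⊗ C) ∘ S f = f`, and coassociativity gives `S f ∘ S g = S (f ∘ S g)`. So `f ⋆ g := f ∘ S g`
is a monoid structure on `C² → C` with unit `ε ⊗ C`, and `S` is a monoid map into `End C²` with
left inverse `(ε ⊗ C) ∘ -`. Hence `f` is `⋆`-invertible iff `S f` is bijective, and then `S`
sends the `⋆`-inverse of `f` to the inverse of `S f`. The same holds for `f ↦ (f ⊗ C) ∘ (C ⊗ Δ)`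
with unit `C ⊗ ε`.
-/

open TensorProduct Coalgebra

section Shear

variable {R C : Type*} [CommSemiring R] [AddCommMonoid C] [Module R C] [Coalgebra R C]

noncomputable def shearLeft (f : C ⊗[R] C →ₗ[R] C) : C ⊗[R] C →ₗ[R] C ⊗[R] C :=
  f.lTensor C ∘ₗ (TensorProduct.assoc R C C C).toLinearMap ∘ₗ (comul (R := R)).rTensor C

noncomputable def shearRight (f : C ⊗[R] C →ₗ[R] C) : C ⊗[R] C →ₗ[R] C ⊗[R] C :=
  f.rTensor C ∘ₗ (TensorProduct.assoc R C C C).symm.toLinearMap ∘ₗ (comul (R := R)).lTensor C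

noncomputable def counitLeft : C ⊗[R] C →ₗ[R] C :=
  (TensorProduct.lid R C).toLinearMap ∘ₗ (counit (R := R) (A := C)).rTensor C

noncomputable def counitRight : C ⊗[R] C →ₗ[R] C :=
  (TensorProduct.rid R C).toLinearMap ∘ₗ (counit (R := R) (A := C)).lTensor C

theorem shearLeft_tmul (f : C ⊗[R] C →ₗ[R] C) (x y : C) :
    shearLeft f (x ⊗ₜ y) = (f ∘ₗ (TensorProduct.mk R C C).flip y).lTensor C (comul x) := by
  simp only [shearLeft, LinearMap.comp_apply, LinearMap.rTensor_tmul, LinearEquiv.coe_coe]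
  induction comul (R := R) x using TensorProduct.induction_on with
  | zero => simp
  | tmul a b => simp
  | add u v hu hv => simp [add_tmul, hu, hv]

theorem shearRight_tmul (f : C ⊗[R] C →ₗ[R] C) (x y : C) :
    shearRight f (x ⊗ₜ y) = (f ∘ₗ TensorProduct.mk R C C x).rTensor C (comul y) := by
  simp only [shearRight, LinearMap.comp_apply, LinearMap.lTensor_tmul, LinearEquiv.coe_coe]
  induction comul (R := R) y using TensorProduct.induction_on with
  | zero => simp
  | tmul a b => simp
  | add u v hu hv => simp [tmul_add, hu, hv]

theorem shearLeft_counitLeft : shearLeft (counitLeft (R := R) (C := C)) = LinearMap.id := by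
  ext x y
  have : counitLeft ∘ₗ (TensorProduct.mk R C C).flip y =
      LinearMap.toSpanSingleton R C y ∘ₗ counit := by
    ext; simp [counitLeft]
  simp [shearLeft_tmul, this, LinearMap.lTensor_comp]

theorem shearRight_counitRight : shearRight (counitRight (R := R) (C := C)) = LinearMap.id := by
  ext x y
  have : counitRight ∘ₗ TensorProduct.mk R C C x =
      LinearMap.toSpanSingleton R C x ∘ₗ counit := by
    ext; simp [counitRight]
  simp [shearRight_tmul, this, LinearMap.rTensor_comp]

theorem counitLeft_comp_shearLeft (f : C ⊗[R] C →ₗ[R] C) : counitLeft ∘ₗ shearLeft f = f := by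
  ext x y
  have : counitLeft ∘ₗ (f ∘ₗ (TensorProduct.mk R C C).flip y).lTensor C =
      (f ∘ₗ (TensorProduct.mk R C C).flip y) ∘ₗ counitLeft := by
    ext; simp [counitLeft]
  simpa [counitLeft, shearLeft_tmul] using congr($this (comul x))

theorem counitRight_comp_shearRight (f : C ⊗[R] C →ₗ[R] C) : counitRight ∘ₗ shearRight f = f := by
  ext x y
  have : counitRight ∘ₗ (f ∘ₗ TensorProduct.mk R C C x).rTensor C =
      (f ∘ₗ TensorProduct.mk R C C x) ∘ₗ counitRight := by
    ext; simp [counitRight]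
  simpa [counitRight, shearRight_tmul] using congr($this (comul y))

theorem shearLeft_comp_lTensor (f : C ⊗[R] C →ₗ[R] C) (h : C →ₗ[R] C) :
    shearLeft f ∘ₗ h.lTensor C = shearLeft (f ∘ₗ h.lTensor C) := by
  refine TensorProduct.ext' fun a b => ?_
  rw [LinearMap.comp_apply, LinearMap.lTensor_tmul, shearLeft_tmul, shearLeft_tmul]
  rfl

theorem shearRight_comp_rTensor (f : C ⊗[R] C →ₗ[R] C) (h : C →ₗ[R] C) :
    shearRight f ∘ₗ h.rTensor C = shearRight (f ∘ₗ h.rTensor C) := by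
  refine TensorProduct.ext' fun a b => ?_
  rw [LinearMap.comp_apply, LinearMap.rTensor_tmul, shearRight_tmul, shearRight_tmul]
  rfl

theorem shearLeft_comul (f : C ⊗[R] C →ₗ[R] C) (x : C) :
    shearLeft f (comul x) = (f ∘ₗ comul).lTensor C (comul x) := by
  simp [shearLeft, LinearMap.lTensor_comp]

theorem shearRight_comul (f : C ⊗[R] C →ₗ[R] C) (x : C) :
    shearRight f (comul x) = (f ∘ₗ comul).rTensor C (comul x) := by
  simp [shearRight, LinearMap.rTensor_comp]

theorem shearLeft_comp_shearLeft (f g : C ⊗[R] C →ₗ[R] C) :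
    shearLeft f ∘ₗ shearLeft g = shearLeft (f ∘ₗ shearLeft g) := by
  refine TensorProduct.ext' fun x y => ?_
  have : (f ∘ₗ (g ∘ₗ (TensorProduct.mk R C C).flip y).lTensor C) ∘ₗ comul =
      (f ∘ₗ shearLeft g) ∘ₗ (TensorProduct.mk R C C).flip y := by
    ext b; simp [shearLeft_tmul]
  rw [LinearMap.comp_apply, shearLeft_tmul, shearLeft_tmul, ← LinearMap.comp_apply (shearLeft f),
    shearLeft_comp_lTensor, shearLeft_comul, this]

theorem shearRight_comp_shearRight (f g : C ⊗[R] C →ₗ[R] C) :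
    shearRight f ∘ₗ shearRight g = shearRight (f ∘ₗ shearRight g) := by
  refine TensorProduct.ext' fun x y => ?_
  have : (f ∘ₗ (g ∘ₗ TensorProduct.mk R C C x).rTensor C) ∘ₗ comul =
      (f ∘ₗ shearRight g) ∘ₗ TensorProduct.mk R C C x := by
    ext b; simp [shearRight_tmul]
  rw [LinearMap.comp_apply, shearRight_tmul, shearRight_tmul,
    ← LinearMap.comp_apply (shearRight f), shearRight_comp_rTensor, shearRight_comul, this]

end Shear

section UnitalAction

variable {R V M : Type*} [Semiring R] [AddCommMonoid V] [AddCommMonoid M] [Module R V]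
  [Module R M] {S : (V →ₗ[R] M) → V →ₗ[R] V} {e : V →ₗ[R] M}

theorem comp_eq_id_of_comp_eq (hunit : S e = LinearMap.id)
    (hcomp : ∀ f g, S f ∘ₗ S g = S (f ∘ₗ S g)) {f g : V →ₗ[R] M} (h : g ∘ₗ S f = e) :
    S g ∘ₗ S f = LinearMap.id := by
  rw [hcomp, h, hunit]

theorem exists_comp_eq_and_comp_eq_iff_bijective (hunit : S e = LinearMap.id)
    (hcounit : ∀ f, e ∘ₗ S f = f) (hcomp : ∀ f g, S f ∘ₗ S g = S (f ∘ₗ S g)) (f : V →ₗ[R] M) :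
    (∃ g, g ∘ₗ S f = e ∧ f ∘ₗ S g = e) ↔ Function.Bijective (S f) := by
  constructor
  · rintro ⟨g, hgf, hfg⟩
    exact Function.bijective_iff_has_inverse.2 ⟨S g,
      LinearMap.congr_fun (comp_eq_id_of_comp_eq hunit hcomp hgf),
      LinearMap.congr_fun (comp_eq_id_of_comp_eq hunit hcomp hfg)⟩
  · intro hf
    set Sf := LinearEquiv.ofBijective (S f) hf
    have hSf : Sf.toLinearMap = S f := rfl
    have hinv : S (e ∘ₗ Sf.symm.toLinearMap) = Sf.symm := by
      calc S (e ∘ₗ Sf.symm.toLinearMap)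
          = S (e ∘ₗ Sf.symm.toLinearMap) ∘ₗ S f ∘ₗ Sf.symm.toLinearMap := by
            rw [← hSf, Sf.comp_symm, LinearMap.comp_id]
        _ = Sf.symm := by
            rw [← LinearMap.comp_assoc, hcomp, LinearMap.comp_assoc, ← hSf, Sf.symm_comp,
              LinearMap.comp_id, hunit, LinearMap.id_comp]
    refine ⟨e ∘ₗ Sf.symm.toLinearMap, ?_, ?_⟩
    · rw [LinearMap.comp_assoc, ← hSf, Sf.symm_comp, LinearMap.comp_id]
    · rw [hinv, ← hcounit f, LinearMap.comp_assoc, ← hSf, Sf.comp_symm, LinearMap.comp_id]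

end UnitalAction
/-- For a coalgebra automorphism `r` of `C² = C ⊗ C` with `σ := (C ⊗ ε) ∘ r`,
`τ := (ε ⊗ C) ∘ r`: maps `σ̄`, `τ̄` witnessing non-degeneracy exist if and only if the maps
`(C ⊗ σ) ∘ (Δ ⊗ C)` and `(τ ⊗ C) ∘ (C ⊗ Δ)` are bijective; and in that case their
compositional inverses are `(C ⊗ σ̄) ∘ (Δ ⊗ C)` and `(τ̄ ⊗ C) ∘ (C ⊗ Δ)` respectively. -/
theorem nondegenerate_iff_bijective {K C : Type*} [Field K] [AddCommGroup C] [Module K C]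
    [Coalgebra K C] (r : (C ⊗[K] C) ≃ₗc[K] (C ⊗[K] C)) :
    let σ : C ⊗[K] C →ₗ[K] C :=
      (TensorProduct.rid K C).toLinearMap ∘ₗ
        LinearMap.lTensor C (counit (R := K) (A := C)) ∘ₗ (r : C ⊗[K] C →ₗ[K] C ⊗[K] C)
    let τ : C ⊗[K] C →ₗ[K] C :=
      (TensorProduct.lid K C).toLinearMap ∘ₗ
        LinearMap.rTensor C (counit (R := K) (A := C)) ∘ₗ (r : C ⊗[K] C →ₗ[K] C ⊗[K] C)
    -- `f ↦ (C ⊗ f) ∘ (Δ ⊗ C)`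
    let G : (C ⊗[K] C →ₗ[K] C) → (C ⊗[K] C →ₗ[K] C ⊗[K] C) := fun f =>
      LinearMap.lTensor C f ∘ₗ (TensorProduct.assoc K C C C).toLinearMap ∘ₗ
        LinearMap.rTensor C (comul (R := K) (A := C))
    -- `f ↦ (f ⊗ C) ∘ (C ⊗ Δ)`
    let H : (C ⊗[K] C →ₗ[K] C) → (C ⊗[K] C →ₗ[K] C ⊗[K] C) := fun f =>
      LinearMap.rTensor C f ∘ₗ (TensorProduct.assoc K C C C).symm.toLinearMap ∘ₗ
        LinearMap.lTensor C (comul (R := K) (A := C))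
    -- `ε ⊗ C` and `C ⊗ ε`, viewed as maps `C² → C`
    let εC : C ⊗[K] C →ₗ[K] C :=
      (TensorProduct.lid K C).toLinearMap ∘ₗ LinearMap.rTensor C (counit (R := K) (A := C))
    let Cε : C ⊗[K] C →ₗ[K] C :=
      (TensorProduct.rid K C).toLinearMap ∘ₗ LinearMap.lTensor C (counit (R := K) (A := C))
    ((∃ σb τb : C ⊗[K] C →ₗ[K] C,
        σb ∘ₗ G σ = εC ∧ σ ∘ₗ G σb = εC ∧ τb ∘ₗ H τ = Cε ∧ τ ∘ₗ H τb = Cε) ↔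
      (Function.Bijective (G σ) ∧ Function.Bijective (H τ))) ∧
    (∀ σb τb : C ⊗[K] C →ₗ[K] C,
      (σb ∘ₗ G σ = εC ∧ σ ∘ₗ G σb = εC ∧ τb ∘ₗ H τ = Cε ∧ τ ∘ₗ H τb = Cε) →
      G σb ∘ₗ G σ = LinearMap.id ∧ G σ ∘ₗ G σb = LinearMap.id ∧
        H τb ∘ₗ H τ = LinearMap.id ∧ H τ ∘ₗ H τb = LinearMap.id) := by
  intro σ τ G H εC Cε
  have hσ := exists_comp_eq_and_comp_eq_iff_bijective shearLeft_counitLeft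
    counitLeft_comp_shearLeft shearLeft_comp_shearLeft σ
  have hτ := exists_comp_eq_and_comp_eq_iff_bijective shearRight_counitRight
    counitRight_comp_shearRight shearRight_comp_shearRight τ
  refine ⟨⟨?_, ?_⟩, ?_⟩
  · rintro ⟨σb, τb, h₁, h₂, h₃, h₄⟩
    exact ⟨hσ.1 ⟨σb, h₁, h₂⟩, hτ.1 ⟨τb, h₃, h₄⟩⟩
  · rintro ⟨hGσ, hHτ⟩
    obtain ⟨σb, h₁, h₂⟩ := hσ.2 hGσ
    obtain ⟨τb, h₃, h₄⟩ := hτ.2 hHτ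
    exact ⟨σb, τb, h₁, h₂, h₃, h₄⟩
  · rintro σb τb ⟨h₁, h₂, h₃, h₄⟩
    exact ⟨comp_eq_id_of_comp_eq shearLeft_counitLeft shearLeft_comp_shearLeft h₁,
      comp_eq_id_of_comp_eq shearLeft_counitLeft shearLeft_comp_shearLeft h₂,
      comp_eq_id_of_comp_eq shearRight_counitRight shearRight_comp_shearRight h₃,
      comp_eq_id_of_comp_eq shearRight_counitRight shearRight_comp_shearRight h₄⟩
end

section
/- Let K be a field and let α₁, α₂, α₃, α₄, β₁, β₂, β₃, β₄, Γ₁, C ∈ K satisfy: C ≠ 0, α_i = 1 + Cβ_i for i = 1,2,3,4, α₁α₃ = α₂α₄, and Γ₁(α₁² − 1) = β₁(α₁β₃ + α₂β₄ + α₁α₃β₁ − β₁ − β₁α₁ − α₁β₂). Then β₁(α₁ + 1)(β₃α₁ − β₂ − Γ₁C) = 0. -/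
/-- The algebraic identity `β₁(α₁ + 1)(β₃α₁ − β₂ − Γ₁C) = 0` used in the classification of
non-degenerate solutions of the braid equation on the incidence coalgebra of a chain. -/
theorem case4_identity {K : Type*} [Field K]
    (α₁ α₂ α₃ α₄ β₁ β₂ β₃ β₄ Γ₁ C : K) (hC : C ≠ 0)
    (h1 : α₁ = 1 + C * β₁) (h2 : α₂ = 1 + C * β₂) (h3 : α₃ = 1 + C * β₃)
    (h4 : α₄ = 1 + C * β₄) (hA : α₁ * α₃ = α₂ * α₄)
    (hΓ : Γ₁ * (α₁ ^ 2 - 1)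
      = β₁ * (α₁ * β₃ + α₂ * β₄ + α₁ * α₃ * β₁ - β₁ - β₁ * α₁ - α₁ * β₂)) :
    β₁ * (α₁ + 1) * (β₃ * α₁ - β₂ - Γ₁ * C) = 0 := by
  have hC_mul : C * (β₁ * (α₁ + 1) * (β₃ * α₁ - β₂ - Γ₁ * C)) = 0 := by
    subst h1 h2 h3 h4
    linear_combination β₁ * hA - C * hΓ
  exact (mul_eq_zero.mp hC_mul).resolve_left hC
end

section
/- Let K be a field and α₁, α₂, α₃ ∈ K^×; set α₄ := α₁α₃/α₂. Let M be the 9 × 9 matrix over K which is zero except for the entries: M₁₁ = M₃₇ = M₇₃ = M₉₉ = 1, M₂₄ = α₂, M₄₂ = α₁, M₅₅ = α₁α₃, M₆₈ = α₄, M₈₆ = α₃. Then, viewing M as a linear endomorphism of V ⊗ V where V = K³ (with the basis of V ⊗ V ordered as e₁⊗e₁, e₁⊗e₂, e₁⊗e₃, e₂⊗e₁, …, e₃⊗e₃), the maps M₁ := M ⊗ id_V and M₂ := id_V ⊗ M on V ⊗ V ⊗ V satisfy the braid equation M₁ ∘ M₂ ∘ M₁ = M₂ ∘ M₁ ∘ M₂.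 -/
/-!
The matrix `M` is a twisted flip, `M (eᵢ ⊗ eⱼ) = c i j • (eⱼ ⊗ eᵢ)` with
`c = !![1, α₁, 1; α₂, α₁α₃, α₃; 1, α₄, 1]`. Both `M₁ M₂ M₁` and `M₂ M₁ M₂` send
`eᵢ ⊗ eⱼ ⊗ eₖ` to `(c i j * c i k * c j k) • (eₖ ⊗ eⱼ ⊗ eᵢ)`, so the braid equation holds
for every choice of weights `c`.
-/

open Matrix Kronecker

/-- View a `9 × 9` matrix as an endomorphism of `K³ ⊗ K³` via the lexicographically ordered
tensor basis, and assert that `M₁ := M ⊗ id₃` and `M₂ := id₃ ⊗ M` satisfy the braid equation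
`M₁M₂M₁ = M₂M₁M₂` on `K²⁷`. -/
def SatisfiesBraid {K : Type*} [Field K] (M : Matrix (Fin 9) (Fin 9) K) : Prop :=
  let e : Fin 3 × Fin 3 ≃ Fin 9 := finProdFinEquiv.trans (finCongr (by norm_num))
  let M' : Matrix (Fin 3 × Fin 3) (Fin 3 × Fin 3) K := Matrix.reindex e.symm e.symm M
  let M₁ : Matrix (Fin 3 × Fin 3 × Fin 3) (Fin 3 × Fin 3 × Fin 3) K :=
    Matrix.reindex (Equiv.prodAssoc (Fin 3) (Fin 3) (Fin 3))
      (Equiv.prodAssoc (Fin 3) (Fin 3) (Fin 3)) (M' ⊗ₖ (1 : Matrix (Fin 3) (Fin 3) K))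
  let M₂ : Matrix (Fin 3 × Fin 3 × Fin 3) (Fin 3 × Fin 3 × Fin 3) K :=
    (1 : Matrix (Fin 3) (Fin 3) K) ⊗ₖ M'
  M₁ * M₂ * M₁ = M₂ * M₁ * M₂

section MonomialMatrix

variable {ι κ R : Type*} [DecidableEq ι] [DecidableEq κ] [CommSemiring R]

def monomialMatrix (σ : Equiv.Perm ι) (w : ι → R) : Matrix ι ι R :=
  Matrix.of fun x y => if x = σ y then w y else 0

theorem monomialMatrix_apply (σ : Equiv.Perm ι) (w : ι → R) (x y : ι) :
    monomialMatrix σ w x y = if x = σ y then w y else 0 :=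
  rfl

theorem monomialMatrix_refl_one : monomialMatrix (Equiv.refl ι) (fun _ => (1 : R)) = 1 := by
  ext x y
  rw [monomialMatrix_apply, Matrix.one_apply]
  rfl

theorem monomialMatrix_mul_monomialMatrix [Fintype ι] (σ τ : Equiv.Perm ι) (u v : ι → R) :
    monomialMatrix σ u * monomialMatrix τ v =
      monomialMatrix (σ * τ) (fun y => u (τ y) * v y) := by
  ext x y
  simp only [Matrix.mul_apply, monomialMatrix_apply, ite_mul, zero_mul, mul_ite, mul_zero]
  rw [Finset.sum_eq_single (τ y)] <;> aesop

theorem monomialMatrix_kronecker_monomialMatrix (σ : Equiv.Perm ι) (τ : Equiv.Perm κ)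
    (u : ι → R) (v : κ → R) :
    monomialMatrix σ u ⊗ₖ monomialMatrix τ v =
      monomialMatrix (σ.prodCongr τ) (fun y => u y.1 * v y.2) := by
  ext ⟨x₁, x₂⟩ ⟨y₁, y₂⟩
  simp only [kroneckerMap_apply, monomialMatrix_apply, Equiv.prodCongr_apply, Prod.map,
    Prod.mk.injEq]
  split_ifs <;> simp_all

theorem reindex_monomialMatrix {ι' : Type*} [DecidableEq ι'] (e : ι ≃ ι') (σ : Equiv.Perm ι)
    (w : ι → R) :
    Matrix.reindex e e (monomialMatrix σ w) = monomialMatrix (e.permCongr σ) (w ∘ e.symm) := by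
  ext x y
  simp only [reindex_apply, submatrix_apply, monomialMatrix_apply, Equiv.permCongr_apply,
    Function.comp_apply]
  split_ifs <;> simp_all [Equiv.symm_apply_eq]

end MonomialMatrix

def twistedFlip {n R : Type*} [DecidableEq n] [CommSemiring R] (c : n → n → R) :
    Matrix (n × n) (n × n) R :=
  monomialMatrix (Equiv.prodComm n n) (fun p => c p.1 p.2)

theorem twistedFlip_braid {n R : Type*} [Fintype n] [DecidableEq n] [CommSemiring R]
    (c : n → n → R) :
    let T₁ := Matrix.reindex (Equiv.prodAssoc n n n) (Equiv.prodAssoc n n n)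
      (twistedFlip c ⊗ₖ (1 : Matrix n n R))
    let T₂ := (1 : Matrix n n R) ⊗ₖ twistedFlip c
    T₁ * T₂ * T₁ = T₂ * T₁ * T₂ := by
  intro T₁ T₂
  simp only [T₁, T₂, twistedFlip, ← monomialMatrix_refl_one,
    monomialMatrix_kronecker_monomialMatrix, reindex_monomialMatrix,
    monomialMatrix_mul_monomialMatrix]
  -- both permutations send `(i, j, k)` to `(k, j, i)`, so `congr` closes that part by `rfl`
  congr 1
  funext ⟨i, j, k⟩
  simp only [mul_one, one_mul, Function.comp_apply, Equiv.permCongr_apply, Equiv.prodAssoc_apply,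
    Equiv.prodAssoc_symm_apply, Equiv.prodCongr_apply, Equiv.coe_prodComm, Equiv.coe_refl,
    Prod.map_apply, Prod.swap_prod_mk, id_eq]
  ring

theorem family1_braid_general {K : Type*} [Field K] (α₁ α₂ α₃ : K) (α₄ : K) :
    SatisfiesBraid
      !![1, 0, 0, 0, 0, 0, 0, 0, 0;
         0, 0, 0, α₂, 0, 0, 0, 0, 0;
         0, 0, 0, 0, 0, 0, 1, 0, 0;
         0, α₁, 0, 0, 0, 0, 0, 0, 0;
         0, 0, 0, 0, α₁ * α₃, 0, 0, 0, 0;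
         0, 0, 0, 0, 0, 0, 0, α₄, 0;
         0, 0, 1, 0, 0, 0, 0, 0, 0;
         0, 0, 0, 0, 0, α₃, 0, 0, 0;
         0, 0, 0, 0, 0, 0, 0, 0, 1] := by
  unfold SatisfiesBraid
  intro _ M' M₁ M₂
  have twisted : M' = twistedFlip !![(1 : K), α₁, 1; α₂, α₁ * α₃, α₃; 1, α₄, 1] := by
    ext ⟨p₁, p₂⟩ ⟨q₁, q₂⟩
    fin_cases p₁ <;> fin_cases p₂ <;> fin_cases q₁ <;> fin_cases q₂ <;> rfl
  simp only [M₁, M₂, twisted]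
  exact twistedFlip_braid _

/-- Family 1 of the classification over the two-element chain yields solutions of the braid
equation. -/
theorem family1_braid {K : Type*} [Field K] (α₁ α₂ α₃ : K)
    (h₁ : α₁ ≠ 0) (h₂ : α₂ ≠ 0) (h₃ : α₃ ≠ 0) (α₄ : K) (hα₄ : α₄ = α₁ * α₃ / α₂) :
    SatisfiesBraid
      !![1, 0, 0, 0, 0, 0, 0, 0, 0;
         0, 0, 0, α₂, 0, 0, 0, 0, 0;
         0, 0, 0, 0, 0, 0, 1, 0, 0;
         0, α₁, 0, 0, 0, 0, 0, 0, 0;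
         0, 0, 0, 0, α₁ * α₃, 0, 0, 0, 0;
         0, 0, 0, 0, 0, 0, 0, α₄, 0;
         0, 0, 1, 0, 0, 0, 0, 0, 0;
         0, 0, 0, 0, 0, α₃, 0, 0, 0;
         0, 0, 0, 0, 0, 0, 0, 0, 1] :=
  family1_braid_general α₁ α₂ α₃ α₄
end

section
/- Let K be a field, β₁, β₃ ∈ K with β₁ + β₃ ≠ 0. Consider the 9 × 9 matrix M over K given by: M₁₁ = M₃₇ = M₇₃ = M₉₉ = 1, M₁₂ = β₁, M₁₄ = −β₁, M₁₅ = β₁β₃, M₂₄ = 1, M₂₅ = −β₃, M₃₄ = β₁, M₃₅ = −β₁β₃, M₃₈ = −β₃, M₄₂ = 1, M₄₅ = β₃, M₅₅ = 1, M₆₅ = β₁, M₆₈ = 1, M₇₂ = −β₁, M₇₅ = −β₁β₃, M₇₆ = β₃, M₈₅ = −β₁, M₈₆ = 1, M₉₅ = β₁β₃, M₉₆ = −β₃, M₉₈ = β₃, and all other entries zero. Then M₁ := M ⊗ id₃ and M₂ := id₃ ⊗ M satisfy the braid equation M₁M₂M₁ = M₂M₁M₂ on K²⁷. -/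
open Matrix Kronecker

/-!
Writing `M` as a tensor `T` with `M (3i + j) (3k + l) = T i j k l`, the entry of `M₁M₂M₁` at
`((a, b, c), (d, e, f))` is `∑ T a b x z * T z c y f * T x y d e` and that of `M₂M₁M₂` is
`∑ T b c z y * T a z d x * T x y e f`. For the tensor of this family the resulting `729`
equations are polynomial identities in `β₁, β₃`, checked one by one.
-/

def IsBraidTensor {ι R : Type*} [Fintype ι] [CommSemiring R] (T : ι → ι → ι → ι → R) : Prop :=
  ∀ a b c d e f, ∑ x, ∑ y, ∑ z, T a b x z * T z c y f * T x y d e =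
    ∑ x, ∑ y, ∑ z, T b c z y * T a z d x * T x y e f

def finPairEquiv : Fin 3 × Fin 3 ≃ Fin 9 := finProdFinEquiv.trans (finCongr (by norm_num))

theorem satisfiesBraid_iff {K : Type*} [Field K] (M : Matrix (Fin 9) (Fin 9) K) :
    SatisfiesBraid M ↔
      IsBraidTensor fun i j k l ↦ M (finPairEquiv (i, j)) (finPairEquiv (k, l)) := by
  rw [SatisfiesBraid, ← Matrix.ext_iff, IsBraidTensor]
  simp only [Prod.forall, Matrix.mul_apply, Fintype.sum_prod_type, Matrix.reindex_apply,
    Matrix.submatrix_apply, Equiv.prodAssoc_symm_apply, Matrix.kroneckerMap_apply,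
    Matrix.one_apply, Equiv.symm_symm, mul_ite, mul_one, mul_zero, ite_mul, one_mul, zero_mul,
    Finset.sum_ite_eq, Finset.sum_ite_eq', Finset.mem_univ, if_true, Finset.sum_ite_irrel,
    Finset.sum_const_zero, Finset.sum_mul]
  rfl

def family3bTensor {R : Type*} [CommRing R] (β₁ β₃ : R) : Fin 3 → Fin 3 → Fin 3 → Fin 3 → R :=
  ![![![![1, β₁, 0], ![-β₁, β₁ * β₃, 0], ![0, 0, 0]],
      ![![0, 0, 0], ![1, -β₃, 0], ![0, 0, 0]],
      ![![0, 0, 0], ![β₁, -β₁ * β₃, 0], ![1, -β₃, 0]]],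
    ![![![0, 1, 0], ![0, β₃, 0], ![0, 0, 0]],
      ![![0, 0, 0], ![0, 1, 0], ![0, 0, 0]],
      ![![0, 0, 0], ![0, β₁, 0], ![0, 1, 0]]],
    ![![![0, -β₁, 1], ![0, -β₁ * β₃, β₃], ![0, 0, 0]],
      ![![0, 0, 0], ![0, -β₁, 1], ![0, 0, 0]],
      ![![0, 0, 0], ![0, β₁ * β₃, -β₃], ![0, β₃, 1]]]]

set_option maxHeartbeats 0 in
theorem isBraidTensor_family3bTensor {R : Type*} [CommRing R] (β₁ β₃ : R) :
    IsBraidTensor (family3bTensor β₁ β₃) := by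
  intro a b c d e f
  simp only [Fin.sum_univ_three]
  fin_cases a <;> fin_cases b <;> fin_cases c <;> fin_cases d <;> fin_cases e <;> fin_cases f <;>
    simp only [Fin.zero_eta, Fin.mk_one, Fin.reduceFinMk, family3bTensor, Matrix.cons_val_zero,
      Matrix.cons_val_one, Matrix.cons_val_two, Matrix.head_cons, Matrix.tail_cons, mul_zero,
      zero_mul, mul_one, one_mul, add_zero, zero_add, neg_mul, mul_neg, neg_neg, neg_zero] <;>
    ring

theorem family3b_braid_general {K : Type*} [Field K] (β₁ β₃ : K) :
    SatisfiesBraid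
      !![1, β₁, 0, -β₁, β₁ * β₃, 0, 0, 0, 0;
         0, 0, 0, 1, -β₃, 0, 0, 0, 0;
         0, 0, 0, β₁, -β₁ * β₃, 0, 1, -β₃, 0;
         0, 1, 0, 0, β₃, 0, 0, 0, 0;
         0, 0, 0, 0, 1, 0, 0, 0, 0;
         0, 0, 0, 0, β₁, 0, 0, 1, 0;
         0, -β₁, 1, 0, -β₁ * β₃, β₃, 0, 0, 0;
         0, 0, 0, 0, -β₁, 1, 0, 0, 0;
         0, 0, 0, 0, β₁ * β₃, -β₃, 0, β₃, 1] := by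
  rw [satisfiesBraid_iff]
  refine (congrArg IsBraidTensor ?_).mpr (isBraidTensor_family3bTensor β₁ β₃)
  funext i j k l
  fin_cases i <;> fin_cases j <;> fin_cases k <;> fin_cases l <;> rfl

/-- The second family in case 3 of the classification (β₃ + β₄ = β₁ + β₂ = 0, Γ₁ = β₁β₃)
yields solutions of the braid equation. -/
theorem family3b_braid {K : Type*} [Field K] (β₁ β₃ : K) (h : β₁ + β₃ ≠ 0) :
    SatisfiesBraid
      !![1, β₁, 0, -β₁, β₁ * β₃, 0, 0, 0, 0;
         0, 0, 0, 1, -β₃, 0, 0, 0, 0;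
         0, 0, 0, β₁, -β₁ * β₃, 0, 1, -β₃, 0;
         0, 1, 0, 0, β₃, 0, 0, 0, 0;
         0, 0, 0, 0, 1, 0, 0, 0, 0;
         0, 0, 0, 0, β₁, 0, 0, 1, 0;
         0, -β₁, 1, 0, -β₁ * β₃, β₃, 0, 0, 0;
         0, 0, 0, 0, -β₁, 1, 0, 0, 0;
         0, 0, 0, 0, β₁ * β₃, -β₃, 0, β₃, 1] :=
  family3b_braid_general β₁ β₃
end
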